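/- arXiv:1609.00467 — 2 statements merged into one kernel-verified Lean document; each statement's English description precedes it below -/
import Mathlib

section
/- Let θ : ℝ^m → (−∞,∞] be a proper closed convex function, A : ℝ^m → ℝ^n linear, c ∈ ℝ^n, z ∈ ℝ^n and λ > 0. Define h(·) = θ*(−A*·)+⟨c,·⟩. If ν̃ ∈ ℝ^m minimizes ν ↦ θ(ν)+⟨z, Aν−c⟩+(λ/2)‖Aν−c‖² over ℝ^m, then, setting ẑ = z+λ(Aν̃−c), one has c−Aν̃ ∈ ∂h(ẑ); consequently ẑ + λw = z with w := c−Aν̃ ∈ ∂h(ẑ), i.e. ẑ = (I+λ∂h)^{-1}(z). -/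
open scoped RealInnerProductSpace

noncomputable section

/-- `w` is a subgradient of the extended-real-valued function `φ` at `x`. -/
def HasSubgrad {E : Type*} [NormedAddCommGroup E] [InnerProductSpace ℝ E]
    (φ : E → EReal) (w x : E) : Prop :=
  ∀ x' : E, φ x + ((⟪w, x' - x⟫ : ℝ) : EReal) ≤ φ x'

/-- `w` is an `ε`-subgradient of `φ` at `x`. -/
def HasESubgrad {E : Type*} [NormedAddCommGroup E] [InnerProductSpace ℝ E]
    (φ : E → EReal) (ε : ℝ) (w x : E) : Prop :=
  ∀ x' : E, φ x + ((⟪w, x' - x⟫ : ℝ) : EReal) - (ε : EReal) ≤ φ x'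

/-- Convexity for an extended-real-valued function. -/
def ConvexE {E : Type*} [NormedAddCommGroup E] [InnerProductSpace ℝ E]
    (φ : E → EReal) : Prop :=
  ∀ x y : E, ∀ a b : ℝ, 0 ≤ a → 0 ≤ b → a + b = 1 →
    φ (a • x + b • y) ≤ (a : EReal) * φ x + (b : EReal) * φ y

/-- Proper closed convex function with values in `(-∞, ∞]`. -/
def IsPCC {E : Type*} [NormedAddCommGroup E] [InnerProductSpace ℝ E]
    (φ : E → EReal) : Prop :=
  (∀ x, φ x ≠ ⊥) ∧ (∃ x, φ x ≠ ⊤) ∧ LowerSemicontinuous φ ∧ ConvexE φ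

/-- Fenchel conjugate. -/
def fconj {E : Type*} [NormedAddCommGroup E] [InnerProductSpace ℝ E]
    (φ : E → EReal) (w : E) : EReal :=
  ⨆ x : E, ((⟪w, x⟫ : ℝ) : EReal) - φ x

/-- Lagrangian of `min { f u + g v : M u + C v = d }`. -/
def Lag {E₁ E₂ F : Type*} [NormedAddCommGroup E₁] [InnerProductSpace ℝ E₁]
    [NormedAddCommGroup E₂] [InnerProductSpace ℝ E₂]
    [NormedAddCommGroup F] [InnerProductSpace ℝ F]
    (f : E₁ → EReal) (g : E₂ → EReal) (M : E₁ →ₗ[ℝ] F) (C : E₂ →ₗ[ℝ] F) (d : F)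
    (u : E₁) (v : E₂) (z : F) : EReal :=
  f u + g v + ((⟪M u + C v - d, z⟫ : ℝ) : EReal)

/-- Saddle point of the Lagrangian. -/
def IsSaddle {E₁ E₂ F : Type*} [NormedAddCommGroup E₁] [InnerProductSpace ℝ E₁]
    [NormedAddCommGroup E₂] [InnerProductSpace ℝ E₂]
    [NormedAddCommGroup F] [InnerProductSpace ℝ F]
    (f : E₁ → EReal) (g : E₂ → EReal) (M : E₁ →ₗ[ℝ] F) (C : E₂ →ₗ[ℝ] F) (d : F)
    (us : E₁) (vs : E₂) (zs : F) : Prop :=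
  Lag f g M C d us vs zs ≠ ⊤ ∧ Lag f g M C d us vs zs ≠ ⊥ ∧
  (∀ u v, Lag f g M C d us vs zs ≤ Lag f g M C d u v zs) ∧
  (∀ ζ, Lag f g M C d us vs ζ ≤ Lag f g M C d us vs zs)

/-- `h₁(z) = f*(-M* z)`. -/
def hOne {E₁ F : Type*} [NormedAddCommGroup E₁] [InnerProductSpace ℝ E₁]
    [FiniteDimensional ℝ E₁] [NormedAddCommGroup F] [InnerProductSpace ℝ F]
    [FiniteDimensional ℝ F] (f : E₁ → EReal) (M : E₁ →ₗ[ℝ] F) (z : F) : EReal :=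
  fconj f (-(LinearMap.adjoint M z))

/-- `h₂(z) = g*(-C* z) + ⟪d, z⟫`. -/
def hTwo {E₂ F : Type*} [NormedAddCommGroup E₂] [InnerProductSpace ℝ E₂]
    [FiniteDimensional ℝ E₂] [NormedAddCommGroup F] [InnerProductSpace ℝ F]
    [FiniteDimensional ℝ F] (g : E₂ → EReal) (C : E₂ →ₗ[ℝ] F) (d : F) (z : F) : EReal :=
  fconj g (-(LinearMap.adjoint C z)) + ((⟪d, z⟫ : ℝ) : EReal)

/-- The extended solution set `S_e(∂h₁, ∂h₂)`. -/
def extSolSet {E₁ E₂ F : Type*} [NormedAddCommGroup E₁] [InnerProductSpace ℝ E₁]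
    [FiniteDimensional ℝ E₁] [NormedAddCommGroup E₂] [InnerProductSpace ℝ E₂]
    [FiniteDimensional ℝ E₂] [NormedAddCommGroup F] [InnerProductSpace ℝ F]
    [FiniteDimensional ℝ F]
    (f : E₁ → EReal) (g : E₂ → EReal) (M : E₁ →ₗ[ℝ] F) (C : E₂ →ₗ[ℝ] F) (d : F) :
    Set (F × F) :=
  {p | HasSubgrad (hOne f M) (-p.2) p.1 ∧ HasSubgrad (hTwo g C d) p.2 p.1}

/-! The augmented term `q ν' = ⟪z, A ν' - c⟫ + (λ/2)‖A ν' - c‖²` is differentiable with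
gradient `A* ẑ` at `ν`, where `ẑ = z + λ(A ν - c)`. Since `θ` is convex, the first-order condition
for the minimizer `ν` of `θ + q` gives `-A* ẑ ∈ ∂θ(ν)`. Fenchel–Young then holds with equality at
`(ν, -A* ẑ)`, so `θ*(-A* ·)` lies above the affine function `z' ↦ ⟪-A* z', ν⟫ - θ ν` and touches it
at `ẑ`; adding `⟪c, ·⟫` shows `c - A ν ∈ ∂h(ẑ)`. -/

open Filter Topology

section

variable {α : Type*}

theorem ne_top_of_forall_add_le {θ : α → EReal} {g : α → ℝ} {ν x₀ : α} (hx₀ : θ x₀ ≠ ⊤)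
    (hmin : ∀ ν', θ ν + g ν ≤ θ ν' + g ν') : θ ν ≠ ⊤ := by
  intro hν
  have h := hmin x₀
  rw [hν, EReal.top_add_coe, top_le_iff] at h
  exact (EReal.add_lt_top hx₀ (EReal.coe_ne_top _)).ne h

theorem exists_eq_coe_of_ne_top {θ : α → EReal} (hbot : ∀ x, θ x ≠ ⊥) {x : α} (hx : θ x ≠ ⊤) :
    ∃ a : ℝ, θ x = a :=
  ⟨(θ x).toReal, (EReal.coe_toReal hx (hbot x)).symm⟩

variable {E F : Type*} [NormedAddCommGroup E] [InnerProductSpace ℝ E]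
  [NormedAddCommGroup F] [InnerProductSpace ℝ F]

theorem ConvexE.le_add_smul_sub {θ : E → EReal} (hθ : ConvexE θ) {x y : E} {a b t : ℝ}
    (hx : θ x = a) (hy : θ y = b) (ht₀ : 0 ≤ t) (ht₁ : t ≤ 1) :
    θ (x + t • (y - x)) ≤ (((1 - t) * a + t * b : ℝ) : EReal) := by
  have h := hθ x y (1 - t) t (by linarith) ht₀ (by ring)
  rwa [hx, hy, ← EReal.coe_mul, ← EReal.coe_mul, ← EReal.coe_add,
    show (1 - t) • x + t • y = x + t • (y - x) by module] at h

theorem hasSubgrad_neg_of_forall_add_le {θ : E → EReal} (hconv : ConvexE θ)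
    (hbot : ∀ x, θ x ≠ ⊥) {g : E → ℝ} {w ν : E} (hg : ∀ d, HasLineDerivAt ℝ g ⟪w, d⟫ ν d)
    (hν : θ ν ≠ ⊤) (hmin : ∀ ν', θ ν + g ν ≤ θ ν' + g ν') : HasSubgrad θ (-w) ν := by
  intro x
  by_cases hx : θ x = ⊤
  · rw [hx]; exact le_top
  obtain ⟨a, ha⟩ := exists_eq_coe_of_ne_top hbot hν
  obtain ⟨b, hb⟩ := exists_eq_coe_of_ne_top hbot hx
  have hslope : Tendsto (fun t : ℝ => t⁻¹ • (g (ν + t • (x - ν)) - g ν)) (𝓝[>] 0)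
      (𝓝 ⟪w, x - ν⟫) :=
    (hg (x - ν)).tendsto_slope_zero_right
  have hbound : ∀ t ∈ Set.Ioo (0 : ℝ) 1, a - b ≤ t⁻¹ • (g (ν + t • (x - ν)) - g ν) := by
    rintro t ⟨ht₀, ht₁⟩
    have h := (hmin _).trans (add_le_add_left (hconv.le_add_smul_sub ha hb ht₀.le ht₁.le) _)
    rw [ha, ← EReal.coe_add, ← EReal.coe_add, EReal.coe_le_coe_iff] at h
    rw [smul_eq_mul, le_inv_mul_iff₀ ht₀]
    linarith
  have hlim : a - b ≤ ⟪w, x - ν⟫ :=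
    ge_of_tendsto hslope (eventually_of_mem (Ioo_mem_nhdsGT one_pos) hbound)
  rw [ha, hb, ← EReal.coe_add, EReal.coe_le_coe_iff, inner_neg_left]
  linarith

theorem le_fconj (θ : E → EReal) (w x : E) : ((⟪w, x⟫ : ℝ) : EReal) - θ x ≤ fconj θ w :=
  le_iSup (fun x => ((⟪w, x⟫ : ℝ) : EReal) - θ x) x

theorem HasSubgrad.fconj_eq {θ : E → EReal} {w ν : E} {a : ℝ} (hν : θ ν = a)
    (h : HasSubgrad θ w ν) : fconj θ w = ((⟪w, ν⟫ - a : ℝ) : EReal) := by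
  refine le_antisymm (iSup_le fun x => ?_)
    (by simpa only [hν, EReal.coe_sub] using le_fconj θ w ν)
  have hx := h x
  rw [hν] at hx
  revert hx
  induction θ x using EReal.rec with
  | bot => intro hx; simp at hx
  | coe b =>
    intro hx
    rw [← EReal.coe_add, EReal.coe_le_coe_iff, inner_sub_right] at hx
    rw [← EReal.coe_sub, EReal.coe_le_coe_iff]
    linarith
  | top => simp

variable [FiniteDimensional ℝ E] [FiniteDimensional ℝ F]

theorem hasFDerivAt_inner_add_norm_sq (A : E →ₗ[ℝ] F) (c z : F) (lam : ℝ) (ν : E) :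
    HasFDerivAt (fun ν' => ⟪z, A ν' - c⟫ + lam / 2 * ‖A ν' - c‖ ^ 2)
      (innerSL ℝ (LinearMap.adjoint A (z + lam • (A ν - c)))) ν := by
  have hA : HasFDerivAt (fun ν' => A ν' - c) (LinearMap.toContinuousLinearMap A) ν :=
    (LinearMap.toContinuousLinearMap A).hasFDerivAt.sub_const c
  refine (((innerSL ℝ z).hasFDerivAt.comp ν hA).add
    (hA.norm_sq.const_mul (lam / 2))).congr_fderiv ?_
  ext d
  simp only [map_sub, ContinuousLinearMap.sub_comp, add_apply, ContinuousLinearMap.comp_apply,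
    LinearMap.coe_toContinuousLinearMap', coe_innerSL_apply, smul_apply, sub_apply, nsmul_eq_mul,
    Nat.cast_ofNat, smul_eq_mul, map_add, map_smul, LinearMap.adjoint_inner_left, add_right_inj]
  ring

theorem HasSubgrad.hasSubgrad_hTwo {θ : E → EReal} {A : E →ₗ[ℝ] F} {c zh : F} {ν : E} {a : ℝ}
    (hν : θ ν = a) (h : HasSubgrad θ (-(LinearMap.adjoint A zh)) ν) :
    HasSubgrad (hTwo θ A c) (c - A ν) zh := by
  intro z'
  have hlower := add_le_add_left (hν ▸ le_fconj θ (-(LinearMap.adjoint A z')) ν)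
    ((⟪c, z'⟫ : ℝ) : EReal)
  refine le_trans (le_of_eq ?_) hlower
  rw [hTwo, h.fconj_eq hν]
  simp only [← EReal.coe_add, ← EReal.coe_sub, EReal.coe_eq_coe_iff, inner_neg_left,
    LinearMap.adjoint_inner_left, inner_sub_left, inner_sub_right, real_inner_comm (A ν)]
  ring

end

theorem resolvent_via_min_general (m n : ℕ)
    (θ : EuclideanSpace ℝ (Fin m) → EReal) (hθ : IsPCC θ)
    (A : EuclideanSpace ℝ (Fin m) →ₗ[ℝ] EuclideanSpace ℝ (Fin n))
    (c z : EuclideanSpace ℝ (Fin n)) (lam : ℝ)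
    (ν : EuclideanSpace ℝ (Fin m))
    (hmin : ∀ ν' : EuclideanSpace ℝ (Fin m),
      θ ν + ((⟪z, A ν - c⟫ + lam / 2 * ‖A ν - c‖ ^ 2 : ℝ) : EReal) ≤
        θ ν' + ((⟪z, A ν' - c⟫ + lam / 2 * ‖A ν' - c‖ ^ 2 : ℝ) : EReal)) :
    HasSubgrad (hTwo θ A c) (c - A ν) (z + lam • (A ν - c)) ∧
      (z + lam • (A ν - c)) + lam • (c - A ν) = z := by
  obtain ⟨hbot, ⟨x₀, hx₀⟩, -, hconv⟩ := hθ
  set q := fun ν' => ⟪z, A ν' - c⟫ + lam / 2 * ‖A ν' - c‖ ^ 2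
  have hν : θ ν ≠ ⊤ := ne_top_of_forall_add_le (g := q) hx₀ hmin
  obtain ⟨a, ha⟩ := exists_eq_coe_of_ne_top hbot hν
  have hsub : HasSubgrad θ (-(LinearMap.adjoint A (z + lam • (A ν - c)))) ν :=
    hasSubgrad_neg_of_forall_add_le (g := q) hconv hbot
      (hasFDerivAt_inner_add_norm_sq A c z lam ν).hasLineDerivAt hν hmin
  exact ⟨hsub.hasSubgrad_hTwo ha, by module⟩

/-- if `ν̃` minimizes `ν ↦ θ(ν) + ⟪z, Aν - c⟫ + (λ/2)‖Aν - c‖²`, then, with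
`ẑ = z + λ(Aν̃ - c)` and `w = c - Aν̃`, one has `w ∈ ∂h(ẑ)` and `ẑ + λ w = z`, where
`h(·) = θ*(-A*·) + ⟪c, ·⟫`; i.e. `ẑ = (I + λ∂h)⁻¹(z)`. -/
theorem resolvent_via_min (m n : ℕ)
    (θ : EuclideanSpace ℝ (Fin m) → EReal) (hθ : IsPCC θ)
    (A : EuclideanSpace ℝ (Fin m) →ₗ[ℝ] EuclideanSpace ℝ (Fin n))
    (c z : EuclideanSpace ℝ (Fin n)) (lam : ℝ) (hlam : 0 < lam)
    (ν : EuclideanSpace ℝ (Fin m))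
    (hmin : ∀ ν' : EuclideanSpace ℝ (Fin m),
      θ ν + ((⟪z, A ν - c⟫ + lam / 2 * ‖A ν - c‖ ^ 2 : ℝ) : EReal) ≤
        θ ν' + ((⟪z, A ν' - c⟫ + lam / 2 * ‖A ν' - c‖ ^ 2 : ℝ) : EReal)) :
    HasSubgrad (hTwo θ A c) (c - A ν) (z + lam • (A ν - c)) ∧
      (z + lam • (A ν - c)) + lam • (c - A ν) = z :=
  resolvent_via_min_general m n θ hθ A c z lam ν hmin
end
end

section
/- For every k ≥ 1 the PMM iterates satisfy d−Cv_k ∈ ∂h2(x_k) and −Mu_k ∈ ∂h1(y_k), where x_k = z_{k-1}+λw_{k-1}+λ(Cv_k−d) and y_k = x_k−λ(w_{k-1}−Mu_k); equivalently x_k = (I+λ∂h2)^{-1}(z_{k-1}+λw_{k-1}) and y_k = (I+λ∂h1)^{-1}(x_k−λw_{k-1}). -/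
open scoped RealInnerProductSpace

noncomputable section

/-!
The subproblem minimizers satisfy first-order optimality conditions: since `v_k` minimizes
`g + ψ ∘ C` with `ψ p = ⟪a, p - d⟫ + λ/2 ‖p - d‖²` smooth, convexity of `g` gives
`-C* x_k ∈ ∂g(v_k)` with `x_k = ∇ψ(C v_k)`, and likewise `-M* y_k ∈ ∂f(u_k)`. The Fenchel–Young
equality inverts these to `v_k ∈ ∂g*(-C* x_k)` and `u_k ∈ ∂f*(-M* y_k)`, and the easy half of
the chain rule for `z ↦ g*(-C* z) + ⟪d, z⟫` yields `d - C v_k ∈ ∂h₂(x_k)` and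
`-M u_k ∈ ∂h₁(y_k)`. The resolvent identities are linear algebra.
-/

theorem ne_top_of_add_coe_le {x y : EReal} {a b : ℝ} (h : x + a ≤ y + b) (hy : y ≠ ⊤) :
    x ≠ ⊤ := by
  rintro rfl
  rw [EReal.top_add_coe, top_le_iff] at h
  exact (EReal.add_lt_top hy (EReal.coe_ne_top b)).ne h

section

variable {E : Type*} [NormedAddCommGroup E] [InnerProductSpace ℝ E]

theorem ConvexE.hasSubgrad_neg_of_isMin_add_of_hasGradientAt [CompleteSpace E] {g : E → EReal}
    (hg : ConvexE g) {ψ : E → ℝ} {p v : E} (hψ : HasGradientAt ψ p v) (htop : g v ≠ ⊤)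
    (hbot : g v ≠ ⊥) (hmin : ∀ v', g v + ψ v ≤ g v' + ψ v') :
    HasSubgrad g (-p) v := by
  obtain ⟨r, hr⟩ : ∃ r : ℝ, g v = r := ⟨(g v).toReal, (EReal.coe_toReal htop hbot).symm⟩
  intro v'
  set w := v' - v
  induction hv' : g v' using EReal.rec with
  | bot =>
    have hle := hmin v'
    rw [hr, hv', EReal.bot_add, ← EReal.coe_add] at hle
    exact absurd (le_bot_iff.mp hle) (EReal.coe_ne_bot _)
  | top => exact le_top
  | coe r' =>
    have hline : HasDerivAt (fun t : ℝ => ψ (v + t • w)) ⟪p, w⟫ 0 := by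
      have : HasDerivAt (fun t : ℝ => v + t • w) w 0 := by
        simpa using ((hasDerivAt_id (0 : ℝ)).smul_const w).const_add v
      exact hψ.hasFDerivAt.comp_hasDerivAt_of_eq 0 this (by simp)
    have hslope : ∀ t : ℝ, 0 < t → t ≤ 1 → r - r' ≤ t⁻¹ * (ψ (v + t • w) - ψ v) := by
      intro t ht0 ht1
      have hconv := hg v v' (1 - t) t (by linarith) ht0.le (by ring)
      have hseg : (1 - t) • v + t • v' = v + t • w := by simp only [w]; module
      have hle := (hmin _).trans (add_le_add_left hconv _)
      rw [hseg, hr, hv', ← EReal.coe_mul, ← EReal.coe_mul, ← EReal.coe_add, ← EReal.coe_add,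
        ← EReal.coe_add, EReal.coe_le_coe_iff] at hle
      rw [le_inv_mul_iff₀ ht0]
      linarith
    have hlim : r - r' ≤ ⟪p, w⟫ := by
      refine ge_of_tendsto (by simpa using hline.tendsto_slope_zero_right) ?_
      filter_upwards [Ioc_mem_nhdsGT one_pos] with t ht using hslope t ht.1 ht.2
    rw [hr, ← EReal.coe_add, EReal.coe_le_coe_iff, inner_neg_left]
    linarith

theorem HasSubgrad.hasSubgrad_fconj {φ : E → EReal} {w x : E} (h : HasSubgrad φ w x)
    (htop : φ x ≠ ⊤) (hbot : φ x ≠ ⊥) : HasSubgrad (fconj φ) x w := by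
  obtain ⟨r, hr⟩ : ∃ r : ℝ, φ x = r := ⟨(φ x).toReal, (EReal.coe_toReal htop hbot).symm⟩
  have young : fconj φ w ≤ ((⟪w, x⟫ - r : ℝ) : EReal) := iSup_le fun x' => by
    have hx' := h x'
    rw [hr] at hx'
    induction hφ : φ x' using EReal.rec with
    | bot =>
      rw [hφ, ← EReal.coe_add] at hx'
      exact absurd (le_bot_iff.mp hx') (EReal.coe_ne_bot _)
    | top => simp
    | coe r' =>
      rw [hφ, ← EReal.coe_add, EReal.coe_le_coe_iff, inner_sub_right] at hx'
      rw [← EReal.coe_sub, EReal.coe_le_coe_iff]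
      linarith
  intro w'
  calc fconj φ w + ((⟪x, w' - w⟫ : ℝ) : EReal)
      ≤ ((⟪w, x⟫ - r : ℝ) : EReal) + ((⟪x, w' - w⟫ : ℝ) : EReal) := add_le_add_left young _
    _ = ((⟪w', x⟫ : ℝ) : EReal) - φ x := by
      rw [hr, ← EReal.coe_add, ← EReal.coe_sub, inner_sub_right, real_inner_comm x w,
        real_inner_comm x w']
      ring_nf
    _ ≤ fconj φ w' := le_iSup (fun x' => ((⟪w', x'⟫ : ℝ) : EReal) - φ x') x

theorem HasSubgrad.add_inner {φ : E → EReal} {w x : E} (h : HasSubgrad φ w x) (d : E) :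
    HasSubgrad (fun x => φ x + ⟪d, x⟫) (d + w) x := by
  intro x'
  calc φ x + ((⟪d, x⟫ : ℝ) : EReal) + ((⟪d + w, x' - x⟫ : ℝ) : EReal)
      = φ x + ((⟪w, x' - x⟫ : ℝ) : EReal) + ((⟪d, x'⟫ : ℝ) : EReal) := by
        rw [add_assoc, add_assoc, ← EReal.coe_add, ← EReal.coe_add, inner_add_left,
          inner_sub_right]
        ring_nf
    _ ≤ φ x' + ((⟪d, x'⟫ : ℝ) : EReal) := add_le_add_left (h x') _

end

section

variable {E F : Type*} [NormedAddCommGroup E] [InnerProductSpace ℝ E] [FiniteDimensional ℝ E]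
  [NormedAddCommGroup F] [InnerProductSpace ℝ F] [FiniteDimensional ℝ F]

theorem HasSubgrad.comp_neg_adjoint {φ : E → EReal} {A : E →ₗ[ℝ] F} {v : E} {z : F}
    (h : HasSubgrad φ v (-(LinearMap.adjoint A z))) :
    HasSubgrad (fun z => φ (-(LinearMap.adjoint A z))) (-(A v)) z := by
  intro z'
  have key : ⟪-(A v), z' - z⟫ = ⟪v, -(LinearMap.adjoint A z') - -(LinearMap.adjoint A z)⟫ := by
    simp only [inner_neg_left, inner_sub_right, inner_neg_right, LinearMap.adjoint_inner_right]
  simpa only [key] using h (-(LinearMap.adjoint A z'))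

theorem hasGradientAt_inner_add_norm_sq (C : E →ₗ[ℝ] F) (d a : F) (lam : ℝ) (v : E) :
    HasGradientAt (fun v => ⟪a, C v - d⟫ + lam / 2 * ‖C v - d‖ ^ 2)
      (LinearMap.adjoint C (a + lam • (C v - d))) v := by
  rw [hasGradientAt_iff_hasFDerivAt]
  have hC : HasFDerivAt (fun v => C v - d) (LinearMap.toContinuousLinearMap C) v :=
    (LinearMap.toContinuousLinearMap C).hasFDerivAt.sub_const d
  refine (((hasFDerivAt_const a v).inner ℝ hC).add
    (hC.norm_sq.const_mul (lam / 2))).congr_fderiv ?_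
  ext w
  simp only [add_apply, ContinuousLinearMap.comp_apply, ContinuousLinearMap.prod_apply,
    zero_apply, LinearMap.coe_toContinuousLinearMap', fderivInnerCLM_apply, inner_zero_left,
    smul_apply, coe_innerSL_apply, InnerProductSpace.toDual_apply_apply,
    LinearMap.adjoint_inner_left, inner_add_left, real_inner_smul_left, smul_eq_mul, nsmul_eq_mul]
  ring

end

theorem pmm_resolvent_inclusions_general (m1 m2 n : ℕ)
    (f : EuclideanSpace ℝ (Fin m1) → EReal) (g : EuclideanSpace ℝ (Fin m2) → EReal)
    (hf : IsPCC f) (hg : IsPCC g)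
    (M : EuclideanSpace ℝ (Fin m1) →ₗ[ℝ] EuclideanSpace ℝ (Fin n))
    (C : EuclideanSpace ℝ (Fin m2) →ₗ[ℝ] EuclideanSpace ℝ (Fin n))
    (d : EuclideanSpace ℝ (Fin n))
    (lam : ℝ)
    (zp wp : EuclideanSpace ℝ (Fin n))
    (vk : EuclideanSpace ℝ (Fin m2)) (uk : EuclideanSpace ℝ (Fin m1))
    (hvk : ∀ v' : EuclideanSpace ℝ (Fin m2),
      g vk + ((⟪zp + lam • wp, C vk - d⟫ + lam / 2 * ‖C vk - d‖ ^ 2 : ℝ) : EReal) ≤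
        g v' + ((⟪zp + lam • wp, C v' - d⟫ + lam / 2 * ‖C v' - d‖ ^ 2 : ℝ) : EReal))
    (huk : ∀ u' : EuclideanSpace ℝ (Fin m1),
      f uk + ((⟪zp + lam • (C vk - d), M uk⟫ + lam / 2 * ‖M uk‖ ^ 2 : ℝ) : EReal) ≤
        f u' + ((⟪zp + lam • (C vk - d), M u'⟫ + lam / 2 * ‖M u'‖ ^ 2 : ℝ) : EReal))
    (xk yk : EuclideanSpace ℝ (Fin n))
    (hxk : xk = zp + lam • wp + lam • (C vk - d))
    (hyk : yk = xk - lam • (wp - M uk)) :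
    HasSubgrad (hTwo g C d) (d - C vk) xk ∧
    HasSubgrad (hOne f M) (-(M uk)) yk ∧
    xk + lam • (d - C vk) = zp + lam • wp ∧
    yk + lam • (-(M uk)) = xk - lam • wp := by
  obtain ⟨v₀, hv₀⟩ := hg.2.1
  obtain ⟨u₀, hu₀⟩ := hf.2.1
  have hgvk : g vk ≠ ⊤ := ne_top_of_add_coe_le (hvk v₀) hv₀
  have hfuk : f uk ≠ ⊤ := ne_top_of_add_coe_le (huk u₀) hu₀
  have hgradM := hasGradientAt_inner_add_norm_sq M 0 (zp + lam • (C vk - d)) lam uk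
  simp only [sub_zero] at hgradM
  have hyk' : yk = zp + lam • (C vk - d) + lam • M uk := by rw [hyk, hxk]; module
  have hvk_sub : HasSubgrad g (-(LinearMap.adjoint C xk)) vk := hxk ▸
    hg.2.2.2.hasSubgrad_neg_of_isMin_add_of_hasGradientAt
      (hasGradientAt_inner_add_norm_sq C d _ lam vk) hgvk (hg.1 vk) hvk
  have huk_sub : HasSubgrad f (-(LinearMap.adjoint M yk)) uk := hyk' ▸
    hf.2.2.2.hasSubgrad_neg_of_isMin_add_of_hasGradientAt hgradM hfuk (hf.1 uk) huk
  refine ⟨?_, (huk_sub.hasSubgrad_fconj hfuk (hf.1 uk)).comp_neg_adjoint,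
    by rw [hxk]; module, by rw [hyk]; module⟩
  rw [sub_eq_add_neg]
  exact ((hvk_sub.hasSubgrad_fconj hgvk (hg.1 vk)).comp_neg_adjoint).add_inner d

/-- the PMM iterates satisfy `d - Cv_k ∈ ∂h₂(x_k)` and `-Mu_k ∈ ∂h₁(y_k)`,
where `x_k = z_{k-1} + λw_{k-1} + λ(Cv_k - d)` and `y_k = x_k - λ(w_{k-1} - Mu_k)`;
equivalently `x_k = (I + λ∂h₂)⁻¹(z_{k-1} + λw_{k-1})` and
`y_k = (I + λ∂h₁)⁻¹(x_k - λw_{k-1})`. -/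
theorem pmm_resolvent_inclusions (m1 m2 n : ℕ)
    (f : EuclideanSpace ℝ (Fin m1) → EReal) (g : EuclideanSpace ℝ (Fin m2) → EReal)
    (hf : IsPCC f) (hg : IsPCC g)
    (M : EuclideanSpace ℝ (Fin m1) →ₗ[ℝ] EuclideanSpace ℝ (Fin n))
    (C : EuclideanSpace ℝ (Fin m2) →ₗ[ℝ] EuclideanSpace ℝ (Fin n))
    (d : EuclideanSpace ℝ (Fin n))
    (hA2 : (intrinsicInterior ℝ {w : EuclideanSpace ℝ (Fin m1) | fconj f w < ⊤} ∩
      Set.range (LinearMap.adjoint M)).Nonempty)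
    (hA3 : (intrinsicInterior ℝ {w : EuclideanSpace ℝ (Fin m2) | fconj g w < ⊤} ∩
      Set.range (LinearMap.adjoint C)).Nonempty)
    (lam : ℝ) (hlam : 0 < lam)
    (zp wp : EuclideanSpace ℝ (Fin n))
    (vk : EuclideanSpace ℝ (Fin m2)) (uk : EuclideanSpace ℝ (Fin m1))
    (hvk : ∀ v' : EuclideanSpace ℝ (Fin m2),
      g vk + ((⟪zp + lam • wp, C vk - d⟫ + lam / 2 * ‖C vk - d‖ ^ 2 : ℝ) : EReal) ≤
        g v' + ((⟪zp + lam • wp, C v' - d⟫ + lam / 2 * ‖C v' - d‖ ^ 2 : ℝ) : EReal))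
    (huk : ∀ u' : EuclideanSpace ℝ (Fin m1),
      f uk + ((⟪zp + lam • (C vk - d), M uk⟫ + lam / 2 * ‖M uk‖ ^ 2 : ℝ) : EReal) ≤
        f u' + ((⟪zp + lam • (C vk - d), M u'⟫ + lam / 2 * ‖M u'‖ ^ 2 : ℝ) : EReal))
    (xk yk : EuclideanSpace ℝ (Fin n))
    (hxk : xk = zp + lam • wp + lam • (C vk - d))
    (hyk : yk = xk - lam • (wp - M uk)) :
    HasSubgrad (hTwo g C d) (d - C vk) xk ∧
    HasSubgrad (hOne f M) (-(M uk)) yk ∧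
    xk + lam • (d - C vk) = zp + lam • wp ∧
    yk + lam • (-(M uk)) = xk - lam • wp :=
  pmm_resolvent_inclusions_general m1 m2 n f g hf hg M C d lam zp wp vk uk hvk huk xk yk hxk hyk
end
end
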